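/- arXiv:1412.3955 — 2 statements merged into one kernel-verified Lean document; each statement's English description precedes it below -/
import Mathlib

section
/- Let k ≥ 75 be an odd integer and let H be a graph such that (k−2)(k−3)/2 < |E(H)| ≤ k(k−1)/2 + 1, the minimum degree of H is at least (k−1)/2, and there is a set S ⊆ E(H) with |S| > (k−2)(k−3)/2 such that the subgraph induced by the edge set S has at most k+2 vertices. Then H has at most k+9 vertices. -/
open scoped Classical in
/-- Let `k ≥ 75` be odd and `H` a graph with `(k−2)(k−3)/2 < |E(H)| ≤ k(k−1)/2 + 1`,
minimum degree at least `(k−1)/2`, and a set `S ⊆ E(H)` with `|S| > (k−2)(k−3)/2` whose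
edge-induced subgraph has at most `k+2` vertices. Then `H` has at most `k+9` vertices.
(Inequalities involving halves are stated in doubled form.) -/
theorem few_vertices_of_dense_edge_core {V : Type*} [Fintype V] [DecidableEq V]
    (k : ℕ) (hk : Odd k) (h75 : 75 ≤ k)
    (H : SimpleGraph V) [DecidableRel H.Adj]
    (hE1 : (k - 2) * (k - 3) < 2 * H.edgeFinset.card)
    (hE2 : 2 * H.edgeFinset.card ≤ k * (k - 1) + 2)
    (hdeg : ∀ v : V, k - 1 ≤ 2 * H.degree v)
    (S : Finset (Sym2 V)) (hS : S ⊆ H.edgeFinset)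
    (hScard : (k - 2) * (k - 3) < 2 * S.card)
    (hSverts : (Finset.univ.filter (fun v : V => ∃ e ∈ S, v ∈ e)).card ≤ k + 2) :
    Fintype.card V ≤ k + 9 := by
  obtain ⟨m, rfl⟩ : ∃ m, k = m + 75 := ⟨k - 75, by omega⟩
  classical
  set U := Finset.univ.filter (fun v : V => ¬ ∃ e ∈ S, v ∈ e) with hU
  set R := H.edgeFinset.filter (fun e => ∃ v ∈ U, v ∈ e) with hRdef
  have hRS : Disjoint R S := by
    rw [Finset.disjoint_left]
    rintro e he heS
    obtain ⟨v, hvU, hve⟩ := (Finset.mem_filter.mp he).2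
    exact (Finset.mem_filter.mp hvU).2 ⟨e, heS, hve⟩
  have hRcard : R.card + S.card ≤ H.edgeFinset.card := by
    rw [← Finset.card_union_of_disjoint hRS]
    exact Finset.card_le_card (Finset.union_subset (Finset.filter_subset _ _) hS)
  have hinc : ∀ u ∈ U, H.incidenceFinset u ⊆ R := by
    intro u hu e he
    rw [SimpleGraph.mem_incidenceFinset, SimpleGraph.incidenceSet] at he
    exact Finset.mem_filter.mpr ⟨SimpleGraph.mem_edgeFinset.mpr he.1, u, hu, he.2⟩
  have hsum : ∑ u ∈ U, H.degree u ≤ 2 * R.card := by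
    calc ∑ u ∈ U, H.degree u
        = ∑ u ∈ U, (H.incidenceFinset u).card := by
          refine Finset.sum_congr rfl fun u _ => ?_
          rw [SimpleGraph.card_incidenceFinset_eq_degree]
      _ ≤ ∑ u ∈ U, (R.filter (fun e => u ∈ e)).card := by
          refine Finset.sum_le_sum fun u hu => Finset.card_le_card fun e he => ?_
          refine Finset.mem_filter.mpr ⟨hinc u hu he, ?_⟩
          rw [SimpleGraph.mem_incidenceFinset, SimpleGraph.incidenceSet] at he
          exact he.2
      _ = ∑ e ∈ R, (U.filter (fun u => u ∈ e)).card := by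
          simp only [Finset.card_filter]
          exact Finset.sum_comm
      _ ≤ ∑ e ∈ R, 2 := by
          refine Finset.sum_le_sum fun e _ => ?_
          induction e using Sym2.ind with
          | _ a b =>
            calc (U.filter (fun u => u ∈ s(a, b))).card
                ≤ ({a, b} : Finset V).card := by
                  refine Finset.card_le_card fun u hu => ?_
                  have := (Finset.mem_filter.mp hu).2
                  rw [Sym2.mem_iff] at this
                  simpa using this
              _ ≤ 2 := Finset.card_insert_le a {b} |>.trans (by simp)
      _ = 2 * R.card := by rw [Finset.sum_const, smul_eq_mul, mul_comm]
  have hUdeg : U.card * (m + 74) ≤ 4 * R.card := by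
    calc U.card * (m + 74) = ∑ _u ∈ U, (m + 74) := by
          rw [Finset.sum_const, smul_eq_mul]
      _ ≤ ∑ u ∈ U, 2 * H.degree u := by
          refine Finset.sum_le_sum fun u _ => ?_
          have := hdeg u; omega
      _ = 2 * ∑ u ∈ U, H.degree u := by rw [Finset.mul_sum]
      _ ≤ 2 * (2 * R.card) := by omega
      _ = 4 * R.card := by ring
  have hU7 : U.card ≤ 7 := by
    by_contra hc
    push_neg at hc
    have h8 : 8 * (m + 74) ≤ U.card * (m + 74) :=
      Nat.mul_le_mul_right _ (by omega)
    have hpq : (m + 75) * (m + 74) = (m + 73) * (m + 72) + 4 * m + 294 := by ring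
    have h1 : (m + 75 - 2) * (m + 75 - 3) = (m + 73) * (m + 72) := by
      congr 1 <;> omega
    rw [h1] at hScard
    have h2 : (m + 75) * (m + 75 - 1) = (m + 75) * (m + 74) := by congr 1 <;> omega
    rw [h2] at hE2
    omega
  have hsplit : (Finset.univ.filter (fun v : V => ∃ e ∈ S, v ∈ e)).card + U.card
      = Fintype.card V := by
    rw [hU, Finset.card_filter_add_card_filter_not, Finset.card_univ]
  omega
end

section
/- With G constructed from G₁,...,G_t as above (subdividing each designated edge e_i twice to get u_i, v_i and adding connector edges {v_i, u_{i+1}} cyclically, t ≥ 2), fix i and suppose G has a cycle C containing all vertices of X = V(G_i) ∪ {u_i, v_i}, where |V(G_i)| = n. Then G_i has a Hamiltonian cycle containing e_i. -/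
/-!
In the cross-composition graph the vertices `(i, x)` of the `i`-th copy of `G i` are joined to
the rest of the graph only by the two edges `uᵢ aᵢ` and `vᵢ bᵢ`. A cycle through `uᵢ` and through
all of these vertices must enter and leave the copy, along two different edges, so it uses both
of them. Cut open at `uᵢ aᵢ`, the cycle becomes a path from `aᵢ` which stays inside the copy until
it leaves through `bᵢ vᵢ`, and never comes back; the part before `bᵢ` is therefore a Hamiltonian
path of `G i` from `aᵢ` to `bᵢ` avoiding the edge `aᵢ bᵢ`, and that edge closes it up.
-/

open SimpleGraph Walk

/-- The underlying relation of the cross-composition graph: vertex-disjoint copies of the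
graphs `G i` (on `Fin t × V`), with the designated edge `{a i, b i}` of each copy replaced
by the path `a i, uᵢ, vᵢ, b i` (where `uᵢ = inr (i, false)`, `vᵢ = inr (i, true)` are new
vertices), plus the connector edges `{vᵢ, u_{i+1}}` (indices modulo `t`). -/
def linkRel (t : ℕ) [NeZero t] (V : Type*) (G : Fin t → SimpleGraph V) (a b : Fin t → V) :
    ((Fin t × V) ⊕ (Fin t × Bool)) → ((Fin t × V) ⊕ (Fin t × Bool)) → Prop
  | Sum.inl (i, x), Sum.inl (j, y) => i = j ∧ (G i).Adj x y ∧ s(x, y) ≠ s(a i, b i)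
  | Sum.inl (i, x), Sum.inr (j, c) => i = j ∧ ((c = false ∧ x = a i) ∨ (c = true ∧ x = b i))
  | Sum.inr _, Sum.inl _ => False
  | Sum.inr (i, c), Sum.inr (j, d) =>
      (j = i ∧ c = false ∧ d = true) ∨ (j = i + 1 ∧ c = true ∧ d = false)

namespace SimpleGraph.Walk

variable {V W : Type*} {G : SimpleGraph V} {H : SimpleGraph W}

theorem edge_mem_edges_of_mem_darts {x y : V} {p : G.Walk x y} {d : G.Dart} (hd : d ∈ p.darts) :
    d.edge ∈ p.edges :=
  p.edges_eq_map_darts ▸ List.mem_map_of_mem hd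

theorem IsCycle.eq_snd_or_eq_penultimate_of_mem_edges {u w : V} {c : G.Walk u u}
    (hc : c.IsCycle) (he : s(u, w) ∈ c.edges) : w = c.snd ∨ w = c.penultimate := by
  cases c with
  | nil => simp at he
  | cons h q =>
    have hq := ((cons_isCycle_iff q h).mp hc).1
    rw [snd_cons, penultimate_cons_of_not_nil _ _ (not_nil_of_ne h.ne.symm)]
    rw [edges_cons, List.mem_cons] at he
    exact he.imp Sym2.congr_right.mp hq.eq_penultimate_of_mem_edges

theorem IsCycle.exists_isPath_of_mem_edges {u w : V} {c : G.Walk u u} (hc : c.IsCycle)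
    (he : s(u, w) ∈ c.edges) :
    ∃ q : G.Walk w u, q.IsPath ∧ s(u, w) ∉ q.edges ∧ ∀ x ∈ c.support, x ∈ q.support := by
  have key : ∀ c' : G.Walk u u, c'.IsCycle → w = c'.snd →
      (∀ x ∈ c.support, x ∈ c'.support) →
      ∃ q : G.Walk w u, q.IsPath ∧ s(u, w) ∉ q.edges ∧ ∀ x ∈ c.support, x ∈ q.support := by
    rintro c' hc' rfl hsub
    have hcons := (cons_isCycle_iff _ _).mp (c'.cons_tail_eq hc'.not_nil ▸ hc')
    refine ⟨c'.tail, hcons.1, hcons.2, fun x hx => ?_⟩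
    have hx' := hsub x hx
    rw [← c'.cons_support_tail hc'.not_nil, List.mem_cons] at hx'
    rcases hx' with rfl | hx'
    exacts [c'.tail.end_mem_support, hx']
  rcases hc.eq_snd_or_eq_penultimate_of_mem_edges he with h | h
  · exact key c hc h fun _ => id
  · exact key c.reverse hc.reverse (by rw [snd_reverse, h]) (by simp)

theorem IsTrail.mem_edges_of_boundary {S : Set V} {u x : V} {e₁ e₂ : Sym2 V} {c : G.Walk u u}
    (hc : c.IsTrail) (hu : u ∉ S) (hx : x ∈ c.support) (hxS : x ∈ S)
    (hbd : ∀ y ∈ S, ∀ z ∉ S, s(y, z) ∈ c.edges → s(y, z) = e₁ ∨ s(y, z) = e₂) :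
    e₁ ∈ c.edges ∧ e₂ ∈ c.edges := by
  classical
  have hsplit : c.edges = (c.takeUntil x hx).edges ++ (c.dropUntil x hx).edges := by
    rw [← edges_append, take_spec]
  -- the trail enters `S` before reaching `x` and leaves it afterwards, along different edges
  obtain ⟨d₁, hd₁, hd₁S, hd₁S'⟩ := (c.takeUntil x hx).exists_boundary_dart Sᶜ hu (by simpa)
  obtain ⟨d₂, hd₂, hd₂S, hd₂S'⟩ := (c.dropUntil x hx).exists_boundary_dart S hxS hu
  have he₁ := edge_mem_edges_of_mem_darts hd₁
  have he₂ := edge_mem_edges_of_mem_darts hd₂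
  have hne : d₁.edge ≠ d₂.edge := fun h =>
    List.disjoint_of_nodup_append (hsplit ▸ hc.edges_nodup) he₁ (h ▸ he₂)
  have hmem₁ : d₁.edge ∈ c.edges := hsplit ▸ List.mem_append_left _ he₁
  have hmem₂ : d₂.edge ∈ c.edges := hsplit ▸ List.mem_append_right _ he₂
  have h₁ := hbd _ (not_not.mp hd₁S') _ hd₁S (by rwa [Sym2.eq_swap])
  have h₂ := hbd _ hd₂S _ hd₂S' hmem₂
  rw [Sym2.eq_swap] at h₁
  change d₁.edge = e₁ ∨ d₁.edge = e₂ at h₁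
  change d₂.edge = e₁ ∨ d₂.edge = e₂ at h₂
  grind

theorem IsTrail.exists_eq_append_cons_of_boundary {S : Set V} {y₀ w₀ : V} :
    ∀ {x z : V} (q : G.Walk x z), q.IsTrail → x ∈ S → z ∉ S →
      (∀ y ∈ S, ∀ w ∉ S, s(y, w) ∈ q.edges → y = y₀ ∧ w = w₀) →
      ∃ (p₁ : G.Walk x y₀) (h : G.Adj y₀ w₀) (p₂ : G.Walk w₀ z),
        q = p₁.append (cons h p₂) ∧ (∀ v ∈ p₁.support, v ∈ S) ∧ ∀ v ∈ p₂.support, v ∉ S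
  | _, _, .nil, _, hx, hz, _ => absurd hx hz
  | _, _, .cons (v := x') h q, hq, hx, hz, hbd => by
    rw [isTrail_cons] at hq
    by_cases hx' : x' ∈ S
    · obtain ⟨p₁, h₀, p₂, rfl, hp₁, hp₂⟩ := exists_eq_append_cons_of_boundary q hq.1 hx' hz
        fun y hy w hw he => hbd y hy w hw (List.mem_cons_of_mem _ he)
      refine ⟨cons h p₁, h₀, p₂, rfl, ?_, hp₂⟩
      simpa [support_cons, hx] using hp₁
    · obtain ⟨rfl, rfl⟩ := hbd _ hx _ hx' List.mem_cons_self
      refine ⟨Walk.nil, h, q, rfl, by simpa using hx, fun v hv hvS => ?_⟩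
      classical
      obtain ⟨d, hd, hdS, hdS'⟩ := (q.takeUntil v hv).exists_boundary_dart Sᶜ hx' (by simpa)
      have hde : s(d.snd, d.fst) ∈ q.edges := Sym2.eq_swap ▸
        q.edges_takeUntil_subset_edges hv (edge_mem_edges_of_mem_darts hd)
      obtain ⟨rfl, rfl⟩ := hbd _ (not_not.mp hdS') _ hdS (List.mem_cons_of_mem _ hde)
      exact hq.2 hde

theorem exists_map_eq_of_support_subset_range (f : G ↪g H) {x y : V} (p : H.Walk (f x) (f y))
    (hp : ∀ w ∈ p.support, w ∈ Set.range f) : ∃ q : G.Walk x y, q.map f.toHom = p := by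
  suffices ∀ {x' y' : W} (p : H.Walk x' y'), (∀ w ∈ p.support, w ∈ Set.range f) →
      ∀ {x y : V} (hx : f x = x') (hy : f y = y'),
        ∃ q : G.Walk x y, q.map f.toHom = p.copy hx.symm hy.symm by
    simpa using this p hp rfl rfl
  intro x' y' p
  induction p with
  | nil =>
    rintro - x y rfl hy
    obtain rfl := f.injective hy
    exact ⟨.nil, rfl⟩
  | cons h p ih =>
    rintro hp x y rfl rfl
    obtain ⟨z, rfl⟩ := hp _ (List.mem_cons_of_mem _ p.start_mem_support)
    obtain ⟨q, hq⟩ := ih (fun w hw => hp w (List.mem_cons_of_mem _ hw)) rfl rfl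
    exact ⟨.cons (f.map_adj_iff.mp h) q, by simpa using hq⟩

theorem IsPath.exists_isHamiltonian_of_mem_support_iff [DecidableEq V] (f : G ↪g H) {x y : V}
    {p : H.Walk (f x) (f y)} (hp : p.IsPath) (hpS : ∀ w, w ∈ p.support ↔ w ∈ Set.range f) :
    ∃ q : G.Walk x y, q.IsHamiltonian := by
  obtain ⟨q, rfl⟩ := exists_map_eq_of_support_subset_range f p fun w hw => (hpS w).mp hw
  refine ⟨q, ((isPath_map_iff_of_injective f.injective).mp hp).isHamiltonian_of_mem fun w => ?_⟩
  simpa [support_map] using (hpS (f w)).mpr ⟨w, rfl⟩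

theorem IsHamiltonian.isHamiltonianCycle_cons [DecidableEq V] {u v : V}
    {p : (G.deleteEdges {s(u, v)}).Walk v u} (hp : p.IsHamiltonian) (h : G.Adj u v) :
    (cons h (p.mapLe (G.deleteEdges_le _))).IsHamiltonianCycle := by
  refine isHamiltonianCycle_iff_isCycle_and_support_count_tail_eq_one.mpr
    ⟨(cons_isCycle_iff _ h).mpr ⟨(isPath_mapLe _).mpr hp.isPath, fun he => ?_⟩,
      fun w => by simpa using hp w⟩
  rw [edges_mapLe_eq_edges] at he
  exact (edgeSet_deleteEdges _ ▸ p.edges_subset_edgeSet he).2 rfl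

end SimpleGraph.Walk

section CrossComposition

variable {t : ℕ} [NeZero t] {V : Type*} (G : Fin t → SimpleGraph V) (a b : Fin t → V)

def blockEmbedding (i : Fin t) :
    (G i).deleteEdges {s(a i, b i)} ↪g fromRel (linkRel t V G a b) where
  toFun x := .inl (i, x)
  inj' x y h := by simpa using h
  map_rel_iff' {x y} := by
    change (fromRel _).Adj (Sum.inl (i, x)) (Sum.inl (i, y)) ↔ _
    simp only [fromRel_adj, linkRel, deleteEdges_adj, Set.mem_singleton_iff, ne_eq,
      Sum.inl.injEq, Prod.mk.injEq, true_and, or_self, Sym2.eq_swap (a := y), adj_comm _ y]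
    exact ⟨fun h => h.2, fun h => ⟨h.1.ne, h⟩⟩

@[simp]
theorem blockEmbedding_apply (i : Fin t) (x : V) : blockEmbedding G a b i x = .inl (i, x) := rfl

variable {G a b} {i : Fin t}

theorem eq_of_adj_leaving_block {y z : (Fin t × V) ⊕ (Fin t × Bool)}
    (hy : y ∈ Set.range (blockEmbedding G a b i)) (hz : z ∉ Set.range (blockEmbedding G a b i))
    (h : (fromRel (linkRel t V G a b)).Adj y z) :
    (y = .inl (i, a i) ∧ z = .inr (i, false)) ∨ (y = .inl (i, b i) ∧ z = .inr (i, true)) := by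
  obtain ⟨x, rfl⟩ := hy
  rcases z with ⟨j, w⟩ | ⟨j, c⟩
  · refine absurd ⟨w, ?_⟩ hz
    obtain ⟨-, ⟨rfl, -⟩ | ⟨rfl, -⟩⟩ := (fromRel_adj _ _ _).mp h <;> rfl
  · obtain ⟨-, ⟨rfl, ⟨rfl, rfl⟩ | ⟨rfl, rfl⟩⟩ | h⟩ := (fromRel_adj _ _ _).mp h
    exacts [.inl ⟨rfl, rfl⟩, .inr ⟨rfl, rfl⟩, h.elim]

theorem mem_edges_inr_false_of_isCycle
    {c : (fromRel (linkRel t V G a b)).Walk (.inr (i, false)) (.inr (i, false))}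
    (hc : c.IsCycle) (hA : blockEmbedding G a b i (a i) ∈ c.support) :
    s(.inr (i, false), blockEmbedding G a b i (a i)) ∈ c.edges := by
  refine (hc.isTrail.mem_edges_of_boundary (S := Set.range (blockEmbedding G a b i))
    (e₂ := s(.inl (i, b i), .inr (i, true))) (by simp) hA ⟨a i, rfl⟩ fun y hy w hw he => ?_).1
  rcases eq_of_adj_leaving_block hy hw (adj_of_mem_edges _ he) with ⟨rfl, rfl⟩ | ⟨rfl, rfl⟩
  exacts [.inl Sym2.eq_swap, .inr rfl]

theorem exists_isHamiltonian_of_isPath_inr_false [DecidableEq V]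
    {q : (fromRel (linkRel t V G a b)).Walk (blockEmbedding G a b i (a i)) (.inr (i, false))}
    (hq : q.IsPath) (hqA : s(.inr (i, false), blockEmbedding G a b i (a i)) ∉ q.edges)
    (hqX : ∀ x, .inl (i, x) ∈ q.support) :
    ∃ r : ((G i).deleteEdges {s(a i, b i)}).Walk (b i) (a i), r.IsHamiltonian := by
  -- with `uᵢ aᵢ` cut, the path can leave the block only through `bᵢ vᵢ`
  obtain ⟨p, hBv, p', rfl, hpX, hp'X⟩ := hq.isTrail.exists_eq_append_cons_of_boundary
    (S := Set.range (blockEmbedding G a b i)) (y₀ := blockEmbedding G a b i (b i))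
    (w₀ := .inr (i, true)) q ⟨a i, rfl⟩ (by simp) fun y hy w hw he => by
      rcases eq_of_adj_leaving_block hy hw (adj_of_mem_edges _ he) with ⟨rfl, rfl⟩ | h
      exacts [(hqA (by rwa [Sym2.eq_swap (a := Sum.inl (i, a i))] at he)).elim, h]
  have hpX' : ∀ x, Sum.inl (i, x) ∈ p.support := by
    intro x
    have hx := hqX x
    rw [mem_support_append_iff, support_cons, List.mem_cons] at hx
    rcases hx with hx | hx | hx
    · exact hx
    · rw [hx]
      exact p.end_mem_support
    · exact absurd ⟨x, rfl⟩ (hp'X _ hx)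
  refine hq.of_append_left.reverse.exists_isHamiltonian_of_mem_support_iff _ fun w => ?_
  rw [support_reverse, List.mem_reverse]
  exact ⟨hpX w, by rintro ⟨x, rfl⟩; exact hpX' x⟩

end CrossComposition

theorem crossComposition_block_cycle_gives_hamiltonian_general (t : ℕ) [NeZero t]
    {V : Type*} [DecidableEq V]
    (G : Fin t → SimpleGraph V) (a b : Fin t → V)
    (hab : ∀ i, (G i).Adj (a i) (b i)) (i : Fin t)
    (hcyc : ∃ (z : (Fin t × V) ⊕ (Fin t × Bool))
        (c : (SimpleGraph.fromRel (linkRel t V G a b)).Walk z z),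
      c.IsCycle ∧ (∀ x : V, Sum.inl (i, x) ∈ c.support) ∧
        Sum.inr (i, false) ∈ c.support ∧ Sum.inr (i, true) ∈ c.support) :
    ∃ c : (G i).Walk (a i) (a i), c.IsHamiltonianCycle ∧ s(a i, b i) ∈ c.edges := by
  obtain ⟨z, c, hc, hcX, huc, -⟩ := hcyc
  have hcX' : ∀ x, Sum.inl (i, x) ∈ (c.rotate _ huc).support :=
    fun x => (mem_support_rotate_iff ..).mpr (hcX x)
  obtain ⟨q, hq, hqA, hqX⟩ := (hc.rotate huc).exists_isPath_of_mem_edges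
    (mem_edges_inr_false_of_isCycle (hc.rotate huc) (hcX' (a i)))
  obtain ⟨r, hr⟩ := exists_isHamiltonian_of_isPath_inr_false hq hqA fun x => hqX _ (hcX' x)
  exact ⟨_, hr.isHamiltonianCycle_cons (hab i), by simp⟩

/-- If the cross-composition graph has a cycle containing all vertices of
`X = V(G_i) ∪ {uᵢ, vᵢ}` for some fixed `i`, then `G i` has a Hamiltonian cycle
containing the designated edge `{a i, b i}`. -/
theorem crossComposition_block_cycle_gives_hamiltonian (t : ℕ) [NeZero t] (ht : 2 ≤ t)
    {V : Type*} [Fintype V] [DecidableEq V]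
    (G : Fin t → SimpleGraph V) (a b : Fin t → V)
    (hab : ∀ i, (G i).Adj (a i) (b i)) (i : Fin t)
    (hcyc : ∃ (z : (Fin t × V) ⊕ (Fin t × Bool))
        (c : (SimpleGraph.fromRel (linkRel t V G a b)).Walk z z),
      c.IsCycle ∧ (∀ x : V, Sum.inl (i, x) ∈ c.support) ∧
        Sum.inr (i, false) ∈ c.support ∧ Sum.inr (i, true) ∈ c.support) :
    ∃ c : (G i).Walk (a i) (a i), c.IsHamiltonianCycle ∧ s(a i, b i) ∈ c.edges :=
  crossComposition_block_cycle_gives_hamiltonian_general t G a b hab i hcyc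
end
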